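/- For every σ² ∈ (1,2), B_KL(σ²) < B_H(σ²), where B_KL(σ²) = √(exp(σ²-1) - σ²) and B_H(σ²) = (σ²-1)/√(2-σ²); hence there exist μ with B_KL(σ²) < |μ| < B_H(σ²) for which the KL divergence and relative Fisher divergence disagree on which of the two models N(μ,1) and N(0,μ²+σ²) is closer to N(μ,σ²). -/

import Mathlib

/-!
Both divergences between Normal densities are expectations, under the data distribution
`N(m, v)`, of quadratic polynomials in `y - m`, so the first two Gaussian moments give them in
closed form. For data from `N(μ, v)`, KL prefers `N(μ, 1)` exactly when `μ² > exp (v - 1) - v`, and the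
relative Fisher divergence prefers `N(0, μ² + v)` exactly when `μ² < (v - 1)² / (2 - v)`. These
thresholds are `BKL v ^ 2` and `BH v ^ 2`, and the first is smaller because `exp (-x) > 1 - x` at
`x = v - 1`.
-/

open MeasureTheory Real

/-- Density of a Normal distribution with mean `m` and variance `v`. -/
noncomputable def normalPDF (m v y : ℝ) : ℝ :=
  (Real.sqrt (2 * Real.pi * v))⁻¹ * Real.exp (-(y - m) ^ 2 / (2 * v))

/-- Kullback-Leibler divergence between positive densities `p` and `q` on `ℝ`. -/
noncomputable def klDiv (p q : ℝ → ℝ) : ℝ := ∫ y : ℝ, p y * Real.log (p y / q y)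

/-- Relative Fisher information divergence between positive densities `p` and `q`. -/
noncomputable def relFisher (p q : ℝ → ℝ) : ℝ :=
  ∫ y : ℝ, (deriv (fun w => Real.log (p w)) y - deriv (fun w => Real.log (q w)) y) ^ 2 * p y

/-- Boundary functions from the closed-form divergence differences. -/
noncomputable def BKL (v : ℝ) : ℝ := Real.sqrt (Real.exp (v - 1) - v)

noncomputable def BH (v : ℝ) : ℝ := (v - 1) / Real.sqrt (2 - v)

open ProbabilityTheory
open scoped NNReal

lemma integral_quadratic_gaussianReal (m : ℝ) (v : ℝ≥0) (a b c : ℝ) :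
    ∫ y, a + b * (y - m) + c * (y - m) ^ 2 ∂gaussianReal m v = a + c * v := by
  have hid : Integrable (fun y : ℝ => y) (gaussianReal m v) :=
    (memLp_id_gaussianReal 1).integrable le_rfl
  have hsq : Integrable (fun y : ℝ => (y - m) ^ 2) (gaussianReal m v) :=
    ((memLp_id_gaussianReal 2).sub (memLp_const m)).integrable_sq
  have hcen : Integrable (fun y : ℝ => y - m) (gaussianReal m v) := hid.sub (integrable_const m)
  have hmean : ∫ y, (y - m) ∂gaussianReal m v = 0 := by
    rw [integral_sub hid (integrable_const m)]
    simp
  have hvar : ∫ y, (y - m) ^ 2 ∂gaussianReal m v = v := by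
    rw [← variance_fun_id_gaussianReal (μ := m) (v := v),
      variance_eq_integral measurable_id'.aemeasurable, integral_id_gaussianReal]
  have hlin : Integrable (fun y : ℝ => a + b * (y - m)) (gaussianReal m v) :=
    (integrable_const a).add (hcen.const_mul b)
  rw [integral_add hlin (hsq.const_mul c), integral_add (integrable_const a) (hcen.const_mul b),
    integral_const_mul, integral_const_mul, hmean, hvar]
  simp

lemma normalPDF_eq_gaussianPDFReal (m : ℝ) {v : ℝ} (hv : 0 ≤ v) :
    normalPDF m v = gaussianPDFReal m v.toNNReal := by
  ext y
  rw [normalPDF, gaussianPDFReal, Real.coe_toNNReal v hv]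

lemma integral_mul_normalPDF (f : ℝ → ℝ) (m : ℝ) {v : ℝ} (hv : 0 < v) :
    ∫ y, f y * normalPDF m v y = ∫ y, f y ∂gaussianReal m v.toNNReal := by
  rw [integral_gaussianReal_eq_integral_smul (by simpa using hv),
    normalPDF_eq_gaussianPDFReal m hv.le]
  simp_rw [smul_eq_mul, mul_comm]

lemma integral_quadratic_mul_normalPDF (m : ℝ) {v : ℝ} (hv : 0 < v) (a b c : ℝ) :
    ∫ y, (a + b * (y - m) + c * (y - m) ^ 2) * normalPDF m v y = a + c * v := by
  rw [integral_mul_normalPDF _ m hv, integral_quadratic_gaussianReal, Real.coe_toNNReal v hv.le]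

lemma normalPDF_pos (m : ℝ) {v : ℝ} (hv : 0 < v) (y : ℝ) : 0 < normalPDF m v y := by
  rw [normalPDF_eq_gaussianPDFReal m hv.le]
  exact gaussianPDFReal_pos _ _ _ (by simpa using hv)

lemma log_normalPDF (m : ℝ) {v : ℝ} (hv : 0 < v) (y : ℝ) :
    log (normalPDF m v y) = -(log (2 * π) + log v) / 2 - (y - m) ^ 2 / (2 * v) := by
  rw [normalPDF, log_mul (by positivity) (exp_ne_zero _), log_exp, log_inv,
    log_sqrt (by positivity), log_mul (by positivity) hv.ne']
  ring

lemma deriv_log_normalPDF (m : ℝ) {v : ℝ} (hv : 0 < v) (y : ℝ) :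
    deriv (fun w => log (normalPDF m v w)) y = -(y - m) / v := by
  have h : HasDerivAt (fun w => -(log (2 * π) + log v) / 2 - (w - m) ^ 2 / (2 * v))
      (-(y - m) / v) y := by
    have hsq : HasDerivAt (fun w => (w - m) ^ 2) (2 * (y - m)) y := by
      simpa using ((hasDerivAt_id y).sub_const m).fun_pow 2
    refine ((hsq.div_const (2 * v)).const_sub _).congr_deriv ?_
    field_simp
  rw [funext (log_normalPDF m hv), h.deriv]

lemma klDiv_normalPDF (m m' : ℝ) {v v' : ℝ} (hv : 0 < v) (hv' : 0 < v') :
    klDiv (normalPDF m v) (normalPDF m' v')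
      = (log v' - log v + (v + (m - m') ^ 2) / v' - 1) / 2 := by
  have h : ∀ y, normalPDF m v y * log (normalPDF m v y / normalPDF m' v' y)
      = ((log v' - log v) / 2 + (m - m') ^ 2 / (2 * v') + (m - m') / v' * (y - m)
          + (1 / (2 * v') - 1 / (2 * v)) * (y - m) ^ 2) * normalPDF m v y := by
    intro y
    rw [log_div (normalPDF_pos m hv y).ne' (normalPDF_pos m' hv' y).ne', log_normalPDF m hv,
      log_normalPDF m' hv']
    field_simp
    ring
  rw [klDiv, funext h, integral_quadratic_mul_normalPDF m hv]
  field_simp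
  ring

lemma relFisher_normalPDF (m m' : ℝ) {v v' : ℝ} (hv : 0 < v) (hv' : 0 < v') :
    relFisher (normalPDF m v) (normalPDF m' v')
      = (m - m') ^ 2 / v' ^ 2 + v * (1 / v' - 1 / v) ^ 2 := by
  have h : ∀ y, (deriv (fun w => log (normalPDF m v w)) y
        - deriv (fun w => log (normalPDF m' v' w)) y) ^ 2 * normalPDF m v y
      = ((m - m') ^ 2 / v' ^ 2 + 2 * (1 / v' - 1 / v) * ((m - m') / v') * (y - m)
          + (1 / v' - 1 / v) ^ 2 * (y - m) ^ 2) * normalPDF m v y := by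
    intro y
    rw [deriv_log_normalPDF m hv, deriv_log_normalPDF m' hv']
    field_simp
    ring
  rw [relFisher, funext h, integral_quadratic_mul_normalPDF m hv]
  ring

lemma klDiv_normalPDF_lt_iff (μ : ℝ) {v : ℝ} (hv : 0 < v) :
    klDiv (normalPDF μ v) (normalPDF μ 1) < klDiv (normalPDF μ v) (normalPDF 0 (μ ^ 2 + v)) ↔
      exp (v - 1) - v < μ ^ 2 := by
  have hw : 0 < μ ^ 2 + v := by positivity
  have hmatch : (v + (μ - 0) ^ 2) / (μ ^ 2 + v) = 1 := by
    rw [div_eq_one_iff_eq hw.ne']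
    ring
  rw [klDiv_normalPDF μ μ hv one_pos, klDiv_normalPDF μ 0 hv hw, hmatch, log_one,
    sub_lt_iff_lt_add, ← lt_log_iff_exp_lt hw]
  constructor <;> intro h <;> linarith

lemma relFisher_normalPDF_lt_iff (μ : ℝ) {v : ℝ} (hv : 0 < v) (hv2 : v < 2) :
    relFisher (normalPDF μ v) (normalPDF 0 (μ ^ 2 + v)) <
        relFisher (normalPDF μ v) (normalPDF μ 1) ↔
      μ ^ 2 < (v - 1) ^ 2 / (2 - v) := by
  have hw : 0 < μ ^ 2 + v := by positivity
  have hscale : (μ - 0) ^ 2 / (μ ^ 2 + v) ^ 2 + v * (1 / (μ ^ 2 + v) - 1 / v) ^ 2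
      = μ ^ 2 / (v * (μ ^ 2 + v)) := by
    field_simp
    ring
  have hloc : (μ - μ) ^ 2 / 1 ^ 2 + v * (1 / 1 - 1 / v) ^ 2 = (v - 1) ^ 2 / v := by
    field_simp
    ring
  have hdiff : (v - 1) ^ 2 * (v * (μ ^ 2 + v)) - μ ^ 2 * v
      = v ^ 2 * ((v - 1) ^ 2 - μ ^ 2 * (2 - v)) := by
    ring
  rw [relFisher_normalPDF μ 0 hv hw, relFisher_normalPDF μ μ hv one_pos, hscale, hloc,
    div_lt_div_iff₀ (by positivity) hv, lt_div_iff₀ (by linarith), ← sub_pos, hdiff,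
    mul_pos_iff_of_pos_left (by positivity), sub_pos]

lemma BKL_lt_abs_iff (v μ : ℝ) : BKL v < |μ| ↔ exp (v - 1) - v < μ ^ 2 := by
  rw [BKL, ← sqrt_sq_eq_abs, sqrt_lt_sqrt_iff (by linarith [add_one_le_exp (v - 1)])]

lemma abs_lt_BH_iff {v : ℝ} (hv : 1 ≤ v) (μ : ℝ) : |μ| < BH v ↔ μ ^ 2 < (v - 1) ^ 2 / (2 - v) := by
  have hBH : BH v = √((v - 1) ^ 2 / (2 - v)) := by
    rw [sqrt_div (sq_nonneg _), sqrt_sq (sub_nonneg.2 hv), BH]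
  rw [hBH, lt_sqrt (abs_nonneg μ), sq_abs]

lemma BKL_lt_BH {v : ℝ} (hv1 : 1 < v) (hv2 : v < 2) : BKL v < BH v := by
  have hBKL : BKL v = |BKL v| := (abs_of_nonneg (sqrt_nonneg _)).symm
  have hexp : (2 - v) * exp (v - 1) < 1 := by
    have h := add_one_lt_exp (x := -(v - 1)) (by linarith)
    calc (2 - v) * exp (v - 1) < exp (-(v - 1)) * exp (v - 1) := by gcongr; linarith
      _ = 1 := by rw [← exp_add, neg_add_cancel, exp_zero]
  rw [hBKL, abs_lt_BH_iff hv1.le, BKL, sq_sqrt (by linarith [add_one_le_exp (v - 1)]),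
    lt_div_iff₀ (by linarith)]
  nlinarith

theorem disagreement_region (v : ℝ) (hv1 : 1 < v) (hv2 : v < 2) :
    BKL v < BH v ∧
      ∃ μ : ℝ, BKL v < |μ| ∧ |μ| < BH v ∧
        klDiv (normalPDF μ v) (normalPDF 0 (μ ^ 2 + v)) >
          klDiv (normalPDF μ v) (normalPDF μ 1) ∧
        relFisher (normalPDF μ v) (normalPDF 0 (μ ^ 2 + v)) <
          relFisher (normalPDF μ v) (normalPDF μ 1) := by
  have hv : 0 < v := by linarith
  obtain ⟨μ, hBKLμ, hμBH⟩ := exists_between (BKL_lt_BH hv1 hv2)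
  have hμ : |μ| = μ := abs_of_nonneg ((sqrt_nonneg _).trans hBKLμ.le)
  rw [← hμ] at hBKLμ hμBH
  exact ⟨BKL_lt_BH hv1 hv2, μ, hBKLμ, hμBH,
    (klDiv_normalPDF_lt_iff μ hv).2 ((BKL_lt_abs_iff v μ).1 hBKLμ),
    (relFisher_normalPDF_lt_iff μ hv hv2).2 ((abs_lt_BH_iff hv1.le μ).1 hμBH)⟩
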